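/- arXiv:1912.11575 — 6 statements merged into one kernel-verified Lean document; each statement's English description precedes it below -/
import Mathlib

section
/- For any p, q ∈ ℝ⁴ there exists a vector u ∈ ℝ⁴ such that uᵀ(A(p,q) − I) = 0 (i.e. uᵀ A(p,q) = uᵀ) and such that D(p,q,f) = u·f for every f ∈ ℝ⁴. In particular, the map f ↦ D(p,q,f) is a linear functional represented by a left fixed vector of A(p,q). -/
/-! The determinant `D(p,q,f)` is the determinant of a matrix `N` with `f` as its last column,
so by cofactor expansion along that column `D(p,q,f) = u ⬝ f`, where `u` is the last row of
`adj N`. The first three columns of `N` are obtained from those of `A - 1` by adding the first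
column to the second and third, so `adj N * N = det N • 1` makes `uᵀ (A - 1)` vanish on the
first three columns; it vanishes on the last one too because the rows of `A - 1` sum to zero. -/

open Matrix

/-- The Markov (state-transition) matrix of the iterated game determined by
the pool's strategy `p` and the miner's strategy `q`. -/
def Amat (p q : Fin 4 → ℝ) : Matrix (Fin 4) (Fin 4) ℝ :=
  Matrix.of fun i =>
    ![p i * q i, p i * (1 - q i), (1 - p i) * q i, (1 - p i) * (1 - q i)]

/-- The Press–Dyson determinant `D(p,q,f)`. -/
def Ddet (p q f : Fin 4 → ℝ) : ℝ :=
  (!![p 0 * q 0 - 1, p 0 - 1, q 0 - 1, f 0;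
      p 1 * q 1,     p 1 - 1, q 1,     f 1;
      p 2 * q 2,     p 2,     q 2 - 1, f 2;
      p 3 * q 3,     p 3,     q 3,     f 3]).det

namespace Matrix

variable {n R : Type*} [Fintype n] [DecidableEq n] [CommRing R]

theorem det_updateCol_eq_adjugate_dotProduct (N : Matrix n n R) (k : n) (f : n → R) :
    (N.updateCol k f).det = N.adjugate k ⬝ᵥ f := by
  rw [← cramer_apply, cramer_eq_adjugate_mulVec, mulVec]

theorem adjugate_dotProduct_transpose_of_ne (N : Matrix n n R) {k j : n} (hjk : j ≠ k) :
    N.adjugate k ⬝ᵥ Nᵀ j = 0 := by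
  have := congrFun (congrFun N.adjugate_mul k) j
  rwa [mul_apply', smul_apply, one_apply_ne hjk.symm, smul_zero] at this

theorem vecMul_eq_self_of_mulVec_one {A : Matrix n n R} (hA : A *ᵥ 1 = 1) {u : n → R} (k : n)
    (hu : ∀ j ≠ k, u ⬝ᵥ (A - 1)ᵀ j = 0) : u ᵥ* A = u := by
  have hcol : ∀ j ≠ k, (u ᵥ* (A - 1)) j = 0 := fun j hj => by
    rw [← hu j hj]; rfl
  have hsum : ∑ j, (u ᵥ* (A - 1)) j = 0 := by
    rw [← dotProduct_one, ← dotProduct_mulVec, sub_mulVec, hA, one_mulVec, sub_self,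
      dotProduct_zero]
  have hk : (u ᵥ* (A - 1)) k = 0 := by
    rwa [Finset.sum_eq_single k (fun j _ hj => hcol j hj) (by simp)] at hsum
  have hzero : u ᵥ* (A - 1) = 0 := funext fun j => by
    by_cases hj : j = k
    · exact hj ▸ hk
    · exact hcol j hj
  rwa [vecMul_sub, vecMul_one, sub_eq_zero] at hzero

end Matrix

def pressDysonMatrix (p q f : Fin 4 → ℝ) : Matrix (Fin 4) (Fin 4) ℝ :=
  !![p 0 * q 0 - 1, p 0 - 1, q 0 - 1, f 0;
     p 1 * q 1,     p 1 - 1, q 1,     f 1;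
     p 2 * q 2,     p 2,     q 2 - 1, f 2;
     p 3 * q 3,     p 3,     q 3,     f 3]

theorem pressDysonMatrix_eq_updateCol (p q f : Fin 4 → ℝ) :
    pressDysonMatrix p q f = (pressDysonMatrix p q 0).updateCol 3 f := by
  ext i j
  fin_cases i <;> fin_cases j <;> simp [pressDysonMatrix]

theorem Amat_mulVec_one (p q : Fin 4 → ℝ) : Amat p q *ᵥ 1 = 1 := by
  funext i
  simp only [mulVec, dotProduct, Amat, of_apply, Pi.one_apply, mul_one, Fin.sum_univ_four,
    cons_val_zero, cons_val_one, cons_val]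
  ring

theorem Amat_sub_one_transpose_eq (p q f : Fin 4 → ℝ) :
    (Amat p q - 1)ᵀ 0 = (pressDysonMatrix p q f)ᵀ 0 ∧
      (Amat p q - 1)ᵀ 1 = (pressDysonMatrix p q f)ᵀ 1 - (pressDysonMatrix p q f)ᵀ 0 ∧
      (Amat p q - 1)ᵀ 2 = (pressDysonMatrix p q f)ᵀ 2 - (pressDysonMatrix p q f)ᵀ 0 := by
  refine ⟨?_, ?_, ?_⟩ <;> funext i <;> fin_cases i <;> simp [Amat, pressDysonMatrix] <;> ring

/-- there is a left fixed vector `u` of `A(p,q)` such that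
`D(p,q,f) = u ⬝ f` for every `f`. -/
theorem exists_left_fixed_vector_representing_Ddet (p q : Fin 4 → ℝ) :
    ∃ u : Fin 4 → ℝ,
      Matrix.vecMul u (Amat p q) = u ∧ ∀ f : Fin 4 → ℝ, Ddet p q f = u ⬝ᵥ f := by
  let N := pressDysonMatrix p q 0
  refine ⟨N.adjugate 3, ?_, fun f => ?_⟩
  · have hN : ∀ j ≠ 3, N.adjugate 3 ⬝ᵥ Nᵀ j = 0 := fun j hj =>
      N.adjugate_dotProduct_transpose_of_ne hj
    obtain ⟨h0, h1, h2⟩ := Amat_sub_one_transpose_eq p q 0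
    refine vecMul_eq_self_of_mulVec_one (Amat_mulVec_one p q) 3 fun j hj => ?_
    match j, hj with
    | 0, _ => rw [h0, hN 0 (by decide)]
    | 1, _ => rw [h1, dotProduct_sub, hN 0 (by decide), hN 1 (by decide), sub_zero]
    | 2, _ => rw [h2, dotProduct_sub, hN 0 (by decide), hN 2 (by decide), sub_zero]
    | 3, h => exact absurd rfl h
  · rw [← det_updateCol_eq_adjugate_dotProduct, ← pressDysonMatrix_eq_updateCol]
    rfl
end

section
/- For any p, q ∈ ℝ⁴ and any vector v ∈ ℝ⁴ satisfying vᵀ A(p,q) = vᵀ, the identity (v·f)·D(p,q,g) = (v·g)·D(p,q,f) holds for all f, g ∈ ℝ⁴. That is, the dot product of a stationary (left fixed) vector of A(p,q) with an arbitrary vector f is proportional to the determinant D(p,q,f), with a proportionality constant independent of f. -/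
open Matrix

/- Press–Dyson: after column operations, `f ↦ D(p,q,f)` is the determinant of `A(p,q) - 1` with
its last column replaced by `f`. If `v ≠ 0` is orthogonal to the other three columns, then for
`h = (v·f) g - (v·g) f` all four columns of that matrix lie in the hyperplane `v^⊥`. So its
determinant `(v·f) D(p,q,g) - (v·g) D(p,q,f)` vanishes. -/

theorem Matrix.dotProduct_mul_det_updateCol_comm {n R : Type*} [Fintype n] [DecidableEq n]
    [CommRing R] [IsDomain R] (M : Matrix n n R) (j : n) (v f g : n → R)
    (hv : ∀ k ≠ j, (v ᵥ* M) k = 0) :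
    (v ⬝ᵥ f) * (M.updateCol j g).det = (v ⬝ᵥ g) * (M.updateCol j f).det := by
  obtain rfl | hv0 := eq_or_ne v 0
  · simp
  set h := (v ⬝ᵥ f) • g + (-(v ⬝ᵥ g)) • f
  have hvh : v ᵥ* M.updateCol j h = 0 := by
    rw [vecMul_updateCol]
    ext k
    obtain rfl | hk := eq_or_ne k j
    · simp only [Function.update_self, h, dotProduct_add, dotProduct_smul, smul_eq_mul,
        Pi.zero_apply]
      ring
    · simp [hk, hv k hk]
  have hdet : (M.updateCol j h).det = 0 := exists_vecMul_eq_zero_iff.mp ⟨v, hv0, hvh⟩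
  rw [det_updateCol_add, det_updateCol_smul, det_updateCol_smul] at hdet
  linear_combination hdet

theorem Ddet_eq_det_updateCol (p q f : Fin 4 → ℝ) :
    Ddet p q f = (((Amat p q - 1) * !![1, 1, 1, 0; 0, 1, 0, 0; 0, 0, 1, 0; 0, 0, 0, 1]).updateCol
      3 f).det := by
  unfold Ddet
  congr 1
  ext i k
  fin_cases i <;> fin_cases k <;>
    simp [Amat, mul_apply, Fin.sum_univ_four, one_apply] <;> ring

/-- for any left fixed (stationary) vector `v` of `A(p,q)`, the
dot product `v ⬝ f` is proportional to `D(p,q,f)` with a constant independent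
of `f`:  `(v·f) D(p,q,g) = (v·g) D(p,q,f)` for all `f, g`. -/
theorem stationary_dot_proportional_Ddet (p q v : Fin 4 → ℝ)
    (hv : Matrix.vecMul v (Amat p q) = v) (f g : Fin 4 → ℝ) :
    (v ⬝ᵥ f) * Ddet p q g = (v ⬝ᵥ g) * Ddet p q f := by
  have hfixed : v ᵥ* (Amat p q - 1) = 0 := by rw [vecMul_sub, vecMul_one, hv, sub_self]
  simp only [Ddet_eq_det_updateCol]
  refine dotProduct_mul_det_updateCol_comm _ 3 v f g fun k _ => ?_
  rw [← vecMul_vecMul, hfixed, zero_vecMul, Pi.zero_apply]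
end

section
/- Let p, q ∈ ℝ⁴ and let v ∈ ℝ⁴ satisfy vᵀ A(p,q) = vᵀ and v·𝟙 = 1, where 𝟙 = (1,1,1,1). If D(p,q,𝟙) ≠ 0, then for every payoff vector S ∈ ℝ⁴ the expected payoff under the stationary vector v satisfies v·S = D(p,q,S) / D(p,q,𝟙). -/
open Matrix

/-!
Write `M = A(p,q) - 1`, so that `vᵀ M = 0`. The first three columns of the matrix whose
determinant is `D(p,q,f)` are the first column of `M` and its sums with the second and the
third column, so `vᵀ` sends that matrix to `(0, 0, 0, v·f)`; with `v·𝟙 = 1` this says that `vᵀ`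
is the last row of the inverse of the matrix of `D(p,q,𝟙)`, and Cramer's rule turns `v·S` into
the quotient of determinants.
-/

theorem Matrix.dotProduct_mul_det_eq_det_updateCol {R n : Type*} [CommRing R] [Fintype n]
    [DecidableEq n] (B : Matrix n n R) (v S : n → R) (j : n) (h : vecMul v B = Pi.single j 1) :
    v ⬝ᵥ S * B.det = (B.updateCol j S).det :=
  calc v ⬝ᵥ S * B.det = v ⬝ᵥ (B *ᵥ B.cramer S) := by
        rw [mulVec_cramer, dotProduct_smul, smul_eq_mul, mul_comm]
    _ = B.cramer S j := by rw [dotProduct_mulVec, h, single_one_dotProduct]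
    _ = (B.updateCol j S).det := cramer_apply _ _ _

theorem Ddet_eq_det_pressDysonMatrix (p q f : Fin 4 → ℝ) :
    Ddet p q f = (pressDysonMatrix p q f).det :=
  rfl

theorem updateCol_pressDysonMatrix (p q f g : Fin 4 → ℝ) :
    (pressDysonMatrix p q f).updateCol 3 g = pressDysonMatrix p q g := by
  ext i j
  fin_cases i <;> fin_cases j <;> rfl

theorem vecMul_pressDysonMatrix {p q v : Fin 4 → ℝ} (hv : vecMul v (Amat p q) = v)
    (f : Fin 4 → ℝ) : vecMul v (pressDysonMatrix p q f) = Pi.single 3 (v ⬝ᵥ f) := by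
  have h0 := congrFun hv 0
  have h1 := congrFun hv 1
  have h2 := congrFun hv 2
  simp only [vecMul, dotProduct, Fin.sum_univ_four, Amat, of_apply, cons_val_zero,
    cons_val_one, cons_val] at h0 h1 h2
  ext j
  fin_cases j <;>
    simp only [vecMul, dotProduct, pressDysonMatrix, Fin.sum_univ_four, Fin.isValue, Fin.zero_eta,
      Fin.mk_one, Fin.reduceFinMk, of_apply, cons_val', cons_val_zero, cons_val_one, cons_val,
      cons_val_fin_one, ne_eq, Fin.reduceEq, not_false_eq_true, Pi.single_eq_of_ne,
      Pi.single_eq_same]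
  · linear_combination h0
  · linear_combination h0 + h1
  · linear_combination h0 + h2

/-- for a normalized stationary vector `v` of `A(p,q)`, provided
`D(p,q,𝟙) ≠ 0`, the expected payoff satisfies
`v·S = D(p,q,S) / D(p,q,𝟙)` for every payoff vector `S`. -/
theorem expected_payoff_eq_Ddet_ratio (p q v : Fin 4 → ℝ)
    (hv : Matrix.vecMul v (Amat p q) = v)
    (hnorm : v ⬝ᵥ (fun _ => (1 : ℝ)) = 1)
    (hD : Ddet p q (fun _ => (1 : ℝ)) ≠ 0) :
    ∀ S : Fin 4 → ℝ, v ⬝ᵥ S = Ddet p q S / Ddet p q (fun _ => (1 : ℝ)) := by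
  intro S
  have hsingle := vecMul_pressDysonMatrix hv (fun _ => 1)
  rw [hnorm] at hsingle
  rw [eq_div_iff hD, Ddet_eq_det_pressDysonMatrix, Ddet_eq_det_pressDysonMatrix,
    dotProduct_mul_det_eq_det_updateCol _ v S 3 hsingle, updateCol_pressDysonMatrix]
end

section
/- Let K_m ∈ ℝ and ρ > σ with σ, ρ ∈ ℝ, and let S_m = (K_m, K_m+σ, K_m−ρ, K_m+σ−ρ). Let p = (p₁,p₂,p₃,p₄) ∈ ℝ⁴ with 1 − p₁ + p₄ ≠ 0, where p₂ = (p₁ρ − (1+p₄)σ)/(ρ−σ) and p₃ = ((1−p₁)σ + p₄ρ)/(ρ−σ). Then for every q ∈ ℝ⁴ and every v ∈ ℝ⁴ with vᵀ A(p,q) = vᵀ, v·𝟙 = 1 and D(p,q,𝟙) ≠ 0, the miner's expected payoff is unilaterally fixed by the pool: v·S_m = ((1−p₁)(K_m+σ−ρ) + p₄ K_m)/(1 − p₁ + p₄), independently of q. -/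
/-!
Summing the first two columns of `A(p,q)` gives the pool's cooperation probabilities `p`, so
every stationary distribution `v` satisfies `v ⬝ᵥ (p - (1,1,0,0)) = 0` whatever `q` is
(Press–Dyson). The formulas for `p₂` and `p₃` say exactly that `p - (1,1,0,0) = α S_m + β 𝟙`
with `α = -(1 - p₁ + p₄)/(ρ - σ) ≠ 0`, and then `v ⬝ᵥ 𝟙 = 1` forces `v ⬝ᵥ S_m = -β/α`.
-/

open Matrix

theorem vecMul_Amat_zero_add_vecMul_Amat_one (p q v : Fin 4 → ℝ) :
    vecMul v (Amat p q) 0 + vecMul v (Amat p q) 1 = v ⬝ᵥ p := by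
  simp only [vecMul, dotProduct, Fin.sum_univ_four, Amat, of_apply, cons_val_zero, cons_val_one]
  ring

theorem dotProduct_sub_eq_zero_of_vecMul_Amat_eq (p q v : Fin 4 → ℝ)
    (hv : vecMul v (Amat p q) = v) : v ⬝ᵥ (p - ![1, 1, 0, 0]) = 0 := by
  have hp := vecMul_Amat_zero_add_vecMul_Amat_one p q v
  rw [hv] at hp
  rw [dotProduct_sub, ← hp]
  simp [dotProduct, Fin.sum_univ_four]

theorem dotProduct_eq_neg_div_of_dotProduct_smul_add_smul_one_eq_zero {ι K : Type*}
    [Fintype ι] [Field K] {v S : ι → K} {α β : K} (hα : α ≠ 0) (hv : v ⬝ᵥ 1 = 1)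
    (h : v ⬝ᵥ (α • S + β • 1) = 0) : v ⬝ᵥ S = -β / α := by
  rw [dotProduct_add, dotProduct_smul, dotProduct_smul, hv, smul_eq_mul, smul_eq_mul] at h
  rw [eq_div_iff hα]
  linear_combination h

theorem sub_eq_smul_add_smul_one_of_zd (Km σ ρ : ℝ) (hρσ : ρ ≠ σ) (p : Fin 4 → ℝ)
    (hp2 : p 1 = (p 0 * ρ - (1 + p 3) * σ) / (ρ - σ))
    (hp3 : p 2 = ((1 - p 0) * σ + p 3 * ρ) / (ρ - σ)) :
    p - ![1, 1, 0, 0] =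
      (-(1 - p 0 + p 3) / (ρ - σ)) • ![Km, Km + σ, Km - ρ, Km + σ - ρ] +
        (p 0 - 1 + (1 - p 0 + p 3) / (ρ - σ) * Km) • 1 := by
  have hρσ' : ρ - σ ≠ 0 := sub_ne_zero.2 hρσ
  ext i
  fin_cases i <;>
    simp only [Fin.zero_eta, Fin.mk_one, Fin.reduceFinMk, Pi.sub_apply, Pi.add_apply, Pi.smul_apply,
      Pi.one_apply, smul_eq_mul, cons_val, cons_val_zero, cons_val_one, hp2, hp3] <;>
    field_simp <;> ring

/-- under the pool's zero-determinant strategy (with `p₂` and `p₃`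
given by the ZD formulas and `1 − p₁ + p₄ ≠ 0`), the miner's expected payoff
is unilaterally fixed at `((1−p₁)(K_m+σ−ρ) + p₄ K_m)/(1 − p₁ + p₄)`,
independently of the miner's strategy `q`. -/
theorem zd_pool_sets_miner_payoff
    (Km σ ρ : ℝ) (hρσ : ρ > σ) (p : Fin 4 → ℝ)
    (hp2 : p 1 = (p 0 * ρ - (1 + p 3) * σ) / (ρ - σ))
    (hp3 : p 2 = ((1 - p 0) * σ + p 3 * ρ) / (ρ - σ))
    (hden : 1 - p 0 + p 3 ≠ 0) :
    ∀ q v : Fin 4 → ℝ,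
      Matrix.vecMul v (Amat p q) = v →
      v ⬝ᵥ (fun _ => (1 : ℝ)) = 1 →
      Ddet p q (fun _ => (1 : ℝ)) ≠ 0 →
      v ⬝ᵥ ![Km, Km + σ, Km - ρ, Km + σ - ρ] =
        ((1 - p 0) * (Km + σ - ρ) + p 3 * Km) / (1 - p 0 + p 3) := by
  intro q v hstat hnorm _
  have hρσ' : ρ - σ ≠ 0 := sub_ne_zero.2 hρσ.ne'
  have hα : -(1 - p 0 + p 3) / (ρ - σ) ≠ 0 := div_ne_zero (neg_ne_zero.2 hden) hρσ'
  have hzero := dotProduct_sub_eq_zero_of_vecMul_Amat_eq p q v hstat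
  rw [sub_eq_smul_add_smul_one_of_zd Km σ ρ hρσ.ne' p hp2 hp3] at hzero
  rw [dotProduct_eq_neg_div_of_dotProduct_smul_add_smul_one_eq_zero hα hnorm hzero]
  field_simp
  ring
end

section
/- Let K_p ∈ ℝ and π, μ ∈ ℝ with π > μ > 0, and let S_p = (K_p, K_p−π, K_p+μ, K_p−π+μ). Suppose p = (p₁,p₂,p₃,p₄) ∈ [0,1]⁴ and α, γ ∈ ℝ satisfy (p₁−1, p₂−1, p₃, p₄) = α S_p + γ 𝟙 componentwise. Then necessarily p = (1,1,0,0), α = 0 and γ = 0. In other words, the pool cannot use a zero-determinant strategy to unilaterally set his own expected payoff: the only feasible strategy of this form is the trivial one p = (1,1,0,0). -/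
/-!
Write `x = α K_p + γ` for the first component. The four components are then `x + α t` for
`t ∈ {0, -π, μ, μ - π}`: the one at `t = 0` is `p₁ - 1 ≤ 0`, while those at `t = μ > 0` and at
`t = μ - π < 0` are the probabilities `p₃, p₄ ≥ 0`. An affine function of `t` that is `≤ 0` at `0`
and `≥ 0` on both sides of it must be constant, so `α = 0`; then `γ = p₁ - 1 ≤ 0 ≤ p₃ = γ`.
-/

lemma eq_zero_of_nonneg_add_mul_of_nonneg_add_mul {x α s t : ℝ} (hx : x ≤ 0)
    (hs : 0 < s) (ht : t < 0) (hxs : 0 ≤ x + α * s) (hxt : 0 ≤ x + α * t) : α = 0 := by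
  have hαs : 0 ≤ α * s := by linarith
  have hαt : 0 ≤ α * t := by linarith
  exact le_antisymm (nonpos_of_mul_nonneg_left hαt ht) (nonneg_of_mul_nonneg_left hαs hs)

/-- the pool cannot use a zero-determinant strategy to set his
own expected payoff: if `p ∈ [0,1]⁴` satisfies
`(p₁−1, p₂−1, p₃, p₄) = α S_p + γ 𝟙` with `π > μ > 0`, then necessarily
`p = (1,1,0,0)`, `α = 0` and `γ = 0`. -/
theorem pool_cannot_set_own_payoff
    (Kp π μ : ℝ) (hπμ : π > μ) (hμ : μ > 0)
    (p : Fin 4 → ℝ) (α γ : ℝ)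
    (hp : ∀ i, p i ∈ Set.Icc (0 : ℝ) 1)
    (Sp : Fin 4 → ℝ)
    (hSp : Sp = ![Kp, Kp - π, Kp + μ, Kp - π + μ])
    (hZD : ![p 0 - 1, p 1 - 1, p 2, p 3] = α • Sp + γ • (fun _ => (1 : ℝ))) :
    p = ![1, 1, 0, 0] ∧ α = 0 ∧ γ = 0 := by
  subst hSp
  have h0 := congr_fun hZD 0
  have h1 := congr_fun hZD 1
  have h2 := congr_fun hZD 2
  have h3 := congr_fun hZD 3
  simp only [Fin.isValue, Matrix.cons_val, Matrix.smul_cons, smul_eq_mul, Matrix.smul_empty,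
    Pi.add_apply, Pi.smul_apply, mul_one] at h0 h1 h2 h3
  have hα : α = 0 :=
    eq_zero_of_nonneg_add_mul_of_nonneg_add_mul (x := α * Kp + γ) (by linarith [(hp 0).2]) hμ
      (sub_neg.mpr hπμ) (by linarith [(hp 2).1]) (by linarith [(hp 3).1])
  subst hα
  have hγ : γ = 0 := by linarith [(hp 0).2, (hp 2).1]
  subst hγ
  refine ⟨?_, rfl, rfl⟩
  ext i
  fin_cases i <;> simp <;> linarith
end

section
/- Let K_m ∈ ℝ and σ, ρ ∈ ℝ with ρ > σ, and define S_m(p₁,p₄) = ((1−p₁)(K_m+σ−ρ) + p₄ K_m)/(1 − p₁ + p₄) on the domain where p₁, p₄ ∈ [0,1] and 1 − p₁ + p₄ > 0. Then: (i) S_m is strictly increasing in p₁ whenever p₄ > 0, and strictly increasing in p₄ whenever p₁ < 1 (its partial derivatives are ∂S_m/∂p₁ = p₄(ρ−σ)/(1−p₁+p₄)² and ∂S_m/∂p₄ = (1−p₁)(ρ−σ)/(1−p₁+p₄)²); (ii) S_m(p₁,p₄) ≤ K_m on the whole domain, with equality if and only if p₁ = 1. In particular the maximal expected payoff K_m = S_m^{cc}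 the pool can assign to the miner is attained exactly when p₁ = 1. -/
/-!
Where `1 - p₁ + p₄ ≠ 0`, writing `u = 1 - p₁`, the payoff is
`S_m = K_m - (ρ - σ) · u / (u + p₄)`: the miner loses a positive multiple of the share
`u / (u + p₄)`, which is increasing in `u`, decreasing in `p₄`, nonnegative, and zero exactly
when `u = 0`.
-/

open Set

/-- The miner's expected payoff set by the pool's zero-determinant strategy
determined by `p₁` and `p₄`. -/
noncomputable def SmVal (Km σ ρ p₁ p₄ : ℝ) : ℝ :=
  ((1 - p₁) * (Km + σ - ρ) + p₄ * Km) / (1 - p₁ + p₄)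

theorem hasDerivAt_linear_div_linear {𝕜 : Type*} [NontriviallyNormedField 𝕜]
    (a b c d x : 𝕜) (h : c * x + d ≠ 0) :
    HasDerivAt (fun x => (a * x + b) / (c * x + d)) ((a * d - b * c) / (c * x + d) ^ 2) x := by
  have hnum := ((hasDerivAt_id' x).const_mul a).add_const b
  have hden := ((hasDerivAt_id' x).const_mul c).add_const d
  exact (hnum.div hden h).congr_deriv (by ring)

section Share

variable {K : Type*} [Field K] [LinearOrder K] [IsStrictOrderedRing K]

theorem strictMonoOn_div_add_right {v : K} (hv : 0 < v) :
    StrictMonoOn (fun u => u / (u + v)) (Ici 0) := by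
  intro u hu u' hu' huu'
  simp only [mem_Ici] at hu hu'
  rw [div_lt_div_iff₀ (by linarith) (by linarith)]
  nlinarith

theorem strictAntiOn_div_add_left {u : K} (hu : 0 < u) :
    StrictAntiOn (fun v => u / (u + v)) (Ici 0) := by
  intro v hv v' _ hvv'
  simp only [mem_Ici] at hv
  exact div_lt_div_of_pos_left hu (by linarith) (by linarith)

end Share

section SmVal

variable {Km σ ρ p₁ p₄ : ℝ}

theorem smVal_eq_sub (h : 1 - p₁ + p₄ ≠ 0) :
    SmVal Km σ ρ p₁ p₄ = Km - (ρ - σ) * ((1 - p₁) / (1 - p₁ + p₄)) := by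
  unfold SmVal
  field_simp
  ring

theorem smVal_lt_smVal {p₁' p₄' : ℝ} (hρσ : σ < ρ) (h : 1 - p₁ + p₄ ≠ 0)
    (h' : 1 - p₁' + p₄' ≠ 0)
    (hshare : (1 - p₁') / (1 - p₁' + p₄') < (1 - p₁) / (1 - p₁ + p₄)) :
    SmVal Km σ ρ p₁ p₄ < SmVal Km σ ρ p₁' p₄' := by
  rw [smVal_eq_sub h, smVal_eq_sub h']
  exact sub_lt_sub_left (mul_lt_mul_of_pos_left hshare (sub_pos.mpr hρσ)) Km

theorem hasDerivAt_smVal_left (h : 1 - p₁ + p₄ ≠ 0) :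
    HasDerivAt (fun x => SmVal Km σ ρ x p₄) (p₄ * (ρ - σ) / (1 - p₁ + p₄) ^ 2) p₁ := by
  have hf : (fun x => SmVal Km σ ρ x p₄) =
      fun x => (-(Km + σ - ρ) * x + (Km + σ - ρ + p₄ * Km)) / (-1 * x + (1 + p₄)) := by
    funext x
    unfold SmVal
    ring_nf
  have h' : -1 * p₁ + (1 + p₄) ≠ 0 := by contrapose! h; linarith
  rw [hf]
  exact (hasDerivAt_linear_div_linear _ _ _ _ p₁ h').congr_deriv (by ring)

theorem hasDerivAt_smVal_right (h : 1 - p₁ + p₄ ≠ 0) :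
    HasDerivAt (fun y => SmVal Km σ ρ p₁ y) ((1 - p₁) * (ρ - σ) / (1 - p₁ + p₄) ^ 2) p₄ := by
  have hf : (fun y => SmVal Km σ ρ p₁ y) =
      fun y => (Km * y + (1 - p₁) * (Km + σ - ρ)) / (1 * y + (1 - p₁)) := by
    funext y
    unfold SmVal
    ring_nf
  have h' : 1 * p₄ + (1 - p₁) ≠ 0 := by contrapose! h; linarith
  rw [hf]
  exact (hasDerivAt_linear_div_linear _ _ _ _ p₄ h').congr_deriv (by ring)

theorem smVal_le (hρσ : σ < ρ) (hp₁ : p₁ ≤ 1) (h : 0 < 1 - p₁ + p₄) :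
    SmVal Km σ ρ p₁ p₄ ≤ Km := by
  rw [smVal_eq_sub h.ne']
  have : 0 ≤ (1 - p₁) / (1 - p₁ + p₄) := div_nonneg (by linarith) h.le
  nlinarith

theorem smVal_eq_iff (hρσ : σ < ρ) (h : 0 < 1 - p₁ + p₄) :
    SmVal Km σ ρ p₁ p₄ = Km ↔ p₁ = 1 := by
  rw [smVal_eq_sub h.ne', sub_eq_self, mul_eq_zero, div_eq_zero_iff, sub_eq_zero, sub_eq_zero,
    eq_comm (a := (1 : ℝ))]
  simp [hρσ.ne', h.ne']

end SmVal

/-- on the domain `p₁, p₄ ∈ [0,1]`, `1 − p₁ + p₄ > 0`: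
(i) `S_m` is strictly increasing in `p₁` whenever `p₄ > 0` and strictly
increasing in `p₄` whenever `p₁ < 1`, with partial derivatives
`p₄(ρ−σ)/(1−p₁+p₄)²` and `(1−p₁)(ρ−σ)/(1−p₁+p₄)²` respectively;
(ii) `S_m ≤ K_m` on the whole domain, with equality iff `p₁ = 1`. -/
theorem zd_miner_payoff_monotone_and_maximal
    (Km σ ρ : ℝ) (hρσ : ρ > σ) :
    -- strictly increasing in p₁ whenever p₄ > 0
    (∀ p₁ p₁' p₄ : ℝ, p₁ ∈ Icc (0:ℝ) 1 → p₁' ∈ Icc (0:ℝ) 1 →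
        p₄ ∈ Icc (0:ℝ) 1 → 0 < p₄ → p₁ < p₁' →
        SmVal Km σ ρ p₁ p₄ < SmVal Km σ ρ p₁' p₄) ∧
    -- strictly increasing in p₄ whenever p₁ < 1
    (∀ p₁ p₄ p₄' : ℝ, p₁ ∈ Icc (0:ℝ) 1 → p₄ ∈ Icc (0:ℝ) 1 →
        p₄' ∈ Icc (0:ℝ) 1 → p₁ < 1 → p₄ < p₄' →
        SmVal Km σ ρ p₁ p₄ < SmVal Km σ ρ p₁ p₄') ∧
    -- partial derivative formulas
    (∀ p₁ p₄ : ℝ, p₁ ∈ Icc (0:ℝ) 1 → p₄ ∈ Icc (0:ℝ) 1 → 0 < 1 - p₁ + p₄ →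
        HasDerivAt (fun x => SmVal Km σ ρ x p₄)
          (p₄ * (ρ - σ) / (1 - p₁ + p₄) ^ 2) p₁ ∧
        HasDerivAt (fun y => SmVal Km σ ρ p₁ y)
          ((1 - p₁) * (ρ - σ) / (1 - p₁ + p₄) ^ 2) p₄) ∧
    -- S_m ≤ K_m with equality iff p₁ = 1
    (∀ p₁ p₄ : ℝ, p₁ ∈ Icc (0:ℝ) 1 → p₄ ∈ Icc (0:ℝ) 1 → 0 < 1 - p₁ + p₄ →
        SmVal Km σ ρ p₁ p₄ ≤ Km ∧ (SmVal Km σ ρ p₁ p₄ = Km ↔ p₁ = 1)) := by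
  refine ⟨?_, ?_, ?_, ?_⟩
  · rintro p₁ p₁' p₄ ⟨-, hp₁⟩ ⟨-, hp₁'⟩ - hp₄ hlt
    refine smVal_lt_smVal hρσ (by linarith) (by linarith) ?_
    exact strictMonoOn_div_add_right hp₄ (by simpa using hp₁') (by simpa using hp₁) (by linarith)
  · rintro p₁ p₄ p₄' - ⟨hp₄, -⟩ - hp₁ hlt
    refine smVal_lt_smVal hρσ (by linarith) (by linarith) ?_
    exact strictAntiOn_div_add_left (sub_pos.mpr hp₁) hp₄ (hp₄.trans hlt.le) hlt
  · intro p₁ p₄ _ _ h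
    exact ⟨hasDerivAt_smVal_left h.ne', hasDerivAt_smVal_right h.ne'⟩
  · rintro p₁ p₄ ⟨-, hp₁⟩ - h
    exact ⟨smVal_le hρσ hp₁ h, smVal_eq_iff hρσ h⟩
end
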